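/- arXiv:1810.09002 — 3 statements merged into one kernel-verified Lean document; each statement's English description precedes it below -/
import Mathlib

section
/- Let n ≥ 2, let w₁,…,wₙ and d₀,…,dₙ be rationals. For any m ≤ n write c_{k,m}(w,d) = Σ_{i=0}^{k} (−1)^{k−i} e_i(d₀,…,d_m) h_{k−i}(w₁,…,w_m). Then for every k ≥ 1: c_{k,n}(w,d) = c_{k,n−1}(w₁,…,w_{n−1}; d₀,…,d_{n−1}) + (d_n − w_n)·Σ_{i=0}^{k−1} (−1)^i w_n^i · c_{k−i−1,n−1}(w₁,…,w_{n−1}; d₀,…,d_{n−1}). -/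
/-!
The numbers `cc w d k` are the coefficients of the power series
`∏ᵢ (1 + dᵢ X) / ∏ⱼ (1 + wⱼ X)`. Adjoining a last weight `x` and a last degree `y` multiplies
this series by `(1 + y X) / (1 + x X) = 1 + (y - x) X ∑ᵢ (-x)ⁱ Xⁱ`, and comparing coefficients
gives the formula. With `d'`, `w'` the tuples without their last entries, the multiplication by
`1 + y X` is the recursion `e_{j+1}(d) = e_{j+1}(d') + y e_j(d')`, and the division by `1 + x X`
is the recursion `h_{m+1}(w) = h_{m+1}(w') + x h_m(w)`.
-/

open Finset

/-- `esym w j` is the `j`-th elementary symmetric polynomial of `w`. -/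
noncomputable def esym {n : ℕ} (w : Fin n → ℚ) (j : ℕ) : ℚ :=
  ∑ s ∈ Finset.univ.powersetCard j, ∏ i ∈ s, w i

/-- `hsym w m` is the complete homogeneous symmetric polynomial of degree `m` in `w`. -/
noncomputable def hsym {n : ℕ} (w : Fin n → ℚ) (m : ℕ) : ℚ :=
  ∑ s ∈ Finset.univ.sym m, (s.toMultiset.map w).prod

/-- virtual Chern class coefficient `c_k = Σ_{i=0}^k (-1)^{k-i} e_i(d) h_{k-i}(w)`. -/
noncomputable def cc {n : ℕ} (w : Fin n → ℚ) (d : Fin (n+1) → ℚ) (k : ℕ) : ℚ :=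
  ∑ i ∈ Finset.range (k+1), (-1)^(k-i) * esym d i * hsym w (k-i)

namespace PowerSeries

variable {R : Type*} [CommRing R]

theorem coeff_succ_one_add_C_mul_X_mul (a : R) (F : R⟦X⟧) (n : ℕ) :
    coeff (n + 1) ((1 + C a * X) * F) = coeff (n + 1) F + a * coeff n F := by
  rw [add_mul, one_mul, mul_assoc, map_add, coeff_C_mul, coeff_succ_X_mul]

theorem one_add_C_mul_X_mul_mk_neg_pow (x : R) :
    (1 + C x * X) * mk (fun i => (-x) ^ i) = 1 := by
  ext (_ | n)
  · simp
  · rw [coeff_succ_one_add_C_mul_X_mul, coeff_mk, coeff_mk, coeff_one, if_neg n.succ_ne_zero]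
    ring

theorem eq_add_of_one_add_C_mul_X_mul_eq {x y : R} {F G : R⟦X⟧}
    (h : (1 + C x * X) * F = (1 + C y * X) * G) :
    F = G + C (y - x) * X * (mk (fun i => (-x) ^ i) * G) := by
  rw [map_sub]
  linear_combination mk (fun i => (-x) ^ i) * h + (G - F) * one_add_C_mul_X_mul_mk_neg_pow x

theorem coeff_eq_of_one_add_C_mul_X_mul_eq {x y : R} {F G : R⟦X⟧}
    (h : (1 + C x * X) * F = (1 + C y * X) * G) (k : ℕ) :
    coeff k F = coeff k G + (y - x) * ∑ i ∈ range k, (-x) ^ i * coeff (k - i - 1) G := by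
  rw [eq_add_of_one_add_C_mul_X_mul_eq h, map_add, mul_assoc, coeff_C_mul]
  rcases k with _ | k
  · simp
  · rw [coeff_succ_X_mul, coeff_mul, Finset.Nat.sum_antidiagonal_eq_sum_range_succ_mk]
    congr 2
    refine sum_congr rfl fun i _ => ?_
    rw [coeff_mk, Nat.sub_right_comm, Nat.add_sub_cancel]

end PowerSeries

theorem Multiset.esymm_cons_succ {R : Type*} [CommSemiring R] (a : R) (s : Multiset R) (j : ℕ) :
    (a ::ₘ s).esymm (j + 1) = s.esymm (j + 1) + a * s.esymm j := by
  simp [esymm, powersetCard_cons, map_map, sum_map_mul_left]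

theorem Fin.univ_val_map_succ {α : Type*} {n : ℕ} (f : Fin (n + 1) → α) :
    univ.val.map f = f (last n) ::ₘ univ.val.map (f ∘ castSucc) := by
  rw [univ_castSuccEmb]
  simp only [cons_val, Multiset.map_cons, map_val, Multiset.map_map]
  rfl

open MvPolynomial in
theorem MvPolynomial.hsymm_option_succ (σ R : Type*) [CommSemiring R] [Fintype σ] [DecidableEq σ]
    (m : ℕ) :
    hsymm (Option σ) R (m + 1)
      = rename some (hsymm σ R (m + 1)) + X none * hsymm (Option σ) R m := by
  simp only [hsymm]
  rw [← symOptionSuccEquiv.symm.sum_comp, Fintype.sum_sum_type, add_comm]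
  simp [mul_sum, map_multiset_prod, Multiset.map_map, symOptionSuccEquiv, Sym.coe_cons]

section Unfolding

variable {n : ℕ}

theorem esym_zero (d : Fin n → ℚ) : esym d 0 = 1 := by
  simp [esym]

theorem esym_eq_multiset_esymm (d : Fin n → ℚ) (j : ℕ) : esym d j = (univ.val.map d).esymm j :=
  (esymm_map_val d univ j).symm

theorem esym_succ_last (d : Fin (n + 1) → ℚ) (j : ℕ) :
    esym d (j + 1)
      = esym (d ∘ Fin.castSucc) (j + 1) + d (Fin.last n) * esym (d ∘ Fin.castSucc) j := by
  simp only [esym_eq_multiset_esymm, Fin.univ_val_map_succ, Multiset.esymm_cons_succ]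

open MvPolynomial in
theorem hsym_eq_aeval_hsymm (w : Fin n → ℚ) (m : ℕ) :
    hsym w m = aeval w (hsymm (Fin n) ℚ m) := by
  simp [hsym, hsymm, sym_univ, map_multiset_prod, Multiset.map_map]

theorem hsym_zero (w : Fin n → ℚ) : hsym w 0 = 1 := by
  simp [hsym_eq_aeval_hsymm]

open MvPolynomial in
theorem hsym_succ_last (w : Fin (n + 1) → ℚ) (m : ℕ) :
    hsym w (m + 1) = hsym (w ∘ Fin.castSucc) (m + 1) + w (Fin.last n) * hsym w m := by
  have h_option (j : ℕ) : hsym w j =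
      aeval (w ∘ finSuccEquivLast.symm) (hsymm (Option (Fin n)) ℚ j) := by
    rw [hsym_eq_aeval_hsymm, ← rename_hsymm _ ℚ j finSuccEquivLast.symm, aeval_rename]
  rw [h_option, h_option, hsymm_option_succ, map_add, map_mul, aeval_rename, aeval_X,
    hsym_eq_aeval_hsymm]
  simp [Function.comp_def, finSuccEquivLast_symm_some]

open PowerSeries

noncomputable def esymSeries (d : Fin n → ℚ) : ℚ⟦X⟧ := mk (esym d)

/-- The expansion of `∏ⱼ (1 + wⱼ X)⁻¹`. -/
noncomputable def signedHsymSeries (w : Fin n → ℚ) : ℚ⟦X⟧ := mk fun j => (-1) ^ j * hsym w j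

noncomputable def chernSeries (w : Fin n → ℚ) (d : Fin (n + 1) → ℚ) : ℚ⟦X⟧ :=
  esymSeries d * signedHsymSeries w

theorem esymSeries_eq_one_add_C_mul_X_mul (d : Fin (n + 1) → ℚ) :
    esymSeries d = (1 + C (d (Fin.last n)) * X) * esymSeries (d ∘ Fin.castSucc) := by
  ext (_ | j)
  · simp [esymSeries, esym_zero]
  · rw [coeff_succ_one_add_C_mul_X_mul]
    simp only [esymSeries, coeff_mk]
    exact esym_succ_last d j

theorem one_add_C_mul_X_mul_signedHsymSeries (w : Fin (n + 1) → ℚ) :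
    (1 + C (w (Fin.last n)) * X) * signedHsymSeries w = signedHsymSeries (w ∘ Fin.castSucc) := by
  ext (_ | j)
  · simp [signedHsymSeries, hsym_zero]
  · rw [coeff_succ_one_add_C_mul_X_mul]
    simp only [signedHsymSeries, coeff_mk, hsym_succ_last]
    ring

theorem one_add_C_mul_X_mul_chernSeries (w : Fin (n + 1) → ℚ) (d : Fin (n + 2) → ℚ) :
    (1 + C (w (Fin.last n)) * X) * chernSeries w d
      = (1 + C (d (Fin.last (n + 1))) * X)
        * chernSeries (w ∘ Fin.castSucc) (d ∘ Fin.castSucc) := by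
  rw [chernSeries, chernSeries, esymSeries_eq_one_add_C_mul_X_mul d,
    ← one_add_C_mul_X_mul_signedHsymSeries w]
  ring

theorem cc_eq_coeff_chernSeries (w : Fin n → ℚ) (d : Fin (n + 1) → ℚ) (k : ℕ) :
    cc w d k = coeff k (chernSeries w d) := by
  rw [chernSeries, coeff_mul, Nat.sum_antidiagonal_eq_sum_range_succ_mk]
  refine sum_congr rfl fun i _ => ?_
  simp only [esymSeries, signedHsymSeries, coeff_mk]
  ring

end Unfolding

theorem chern_unfolding_general (m : ℕ) (w : Fin (m+1) → ℚ) (d : Fin (m+2) → ℚ)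
    (k : ℕ) :
    cc w d k = cc (w ∘ Fin.castSucc) (d ∘ Fin.castSucc) k
      + (d (Fin.last (m+1)) - w (Fin.last m)) *
        ∑ i ∈ Finset.range k,
          (-1)^i * (w (Fin.last m))^i * cc (w ∘ Fin.castSucc) (d ∘ Fin.castSucc) (k - i - 1) := by
  simp only [cc_eq_coeff_chernSeries, ← neg_pow]
  exact PowerSeries.coeff_eq_of_one_add_C_mul_X_mul_eq (one_add_C_mul_X_mul_chernSeries w d) k

theorem chern_unfolding (m : ℕ) (hm : 1 ≤ m) (w : Fin (m+1) → ℚ) (d : Fin (m+2) → ℚ)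
    (k : ℕ) (hk : 1 ≤ k) :
    cc w d k = cc (w ∘ Fin.castSucc) (d ∘ Fin.castSucc) k
      + (d (Fin.last (m+1)) - w (Fin.last m)) *
        ∑ i ∈ Finset.range k,
          (-1)^i * (w (Fin.last m))^i * cc (w ∘ Fin.castSucc) (d ∘ Fin.castSucc) (k - i - 1) :=
  chern_unfolding_general m w d k
end

section
/- Let n ≥ 1, r ≥ 1, let w₁,…,w_{n+r} be nonzero rationals and d₀,…,d_{n+r} rationals with d_{n+j} = w_{n+j} for all j = 1,…,r. Define c_{k,m}(w,d) = Σ_{i=0}^{k} (−1)^{k−i} e_i(d₀,…,d_m) h_{k−i}(w₁,…,w_m) and s_{0,m} = (d₀⋯d_m)/(w₁⋯w_m). Then c_{k,n+r}(w,d) = c_{k,n}(w₁,…,wₙ; d₀,…,dₙ) for all k, and s_{0,n+r} = s_{0,n}. -/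
/-!
Both invariants are read off the series `∏ᵢ (1 + dᵢ t) / ∏ⱼ (1 + wⱼ t)`: its numerator is
`∑ eᵢ(d) tⁱ` and the inverse of its denominator is `∑ (-1)ʲ hⱼ(w) tʲ`, so `c_k` is its `k`-th
coefficient. A trivial unfolding multiplies numerator and denominator by the same factor
`∏ⱼ (1 + w_{n+j} t)`, which cancels; likewise `s₀` gains the factor `∏ⱼ w_{n+j} / ∏ⱼ w_{n+j}`,
which is `1` because the weights are nonzero.
-/

open Finset

open PowerSeries

theorem PowerSeries.prod_one_add_C_mul_X {ι R : Type*} [CommSemiring R] (s : Finset ι)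
    (f : ι → R) :
    ∏ i ∈ s, (1 + C (f i) * X) = mk fun k => ∑ t ∈ s.powersetCard k, ∏ i ∈ t, f i := by
  ext k
  simp_rw [prod_one_add, map_sum, prod_mul_distrib, prod_const, ← map_prod, coeff_mk,
    coeff_C_mul_X_pow, sum_ite, sum_const_zero, add_zero, powersetCard_eq_filter, eq_comm]

theorem PowerSeries.mk_pow_mul_one_sub_C_mul_X {R : Type*} [CommRing R] (a : R) :
    (mk fun n => a ^ n) * (1 - C a * X) = 1 := by
  simpa [rescale_mk, rescale_X] using congrArg (rescale a) (mk_one_mul_one_sub_eq_one R)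

theorem Finset.sum_sym_insert {ι R : Type*} [DecidableEq ι] [CommSemiring R] {s : Finset ι}
    {a : ι} (ha : a ∉ s) (f : ι → R) (k : ℕ) :
    ∑ m ∈ (insert a s).sym k, (m.toMultiset.map f).prod
      = ∑ i ∈ range (k + 1), f a ^ i * ∑ m ∈ s.sym (k - i), (m.toMultiset.map f).prod := by
  rw [← sum_coe_sort ((insert a s).sym k), ← (symInsertEquiv ha).symm.sum_comp,
    Fintype.sum_sigma, ← Fin.sum_univ_eq_sum_range
      (fun i => f a ^ i * ∑ m ∈ s.sym (k - i), (m.toMultiset.map f).prod)]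
  refine Fintype.sum_congr _ _ fun i => ?_
  rw [mul_sum, ← sum_coe_sort (s.sym (k - i))]
  refine Fintype.sum_congr _ _ fun m => ?_
  simp [Sym.coe_fill, Sym.coe_replicate, mul_comm]

noncomputable def hsymSeries {ι R : Type*} [DecidableEq ι] [CommSemiring R] (s : Finset ι)
    (f : ι → R) : R⟦X⟧ :=
  mk fun k => ∑ m ∈ s.sym k, (m.toMultiset.map f).prod

theorem hsymSeries_insert {ι R : Type*} [DecidableEq ι] [CommSemiring R] {s : Finset ι}
    {a : ι} (ha : a ∉ s) (f : ι → R) :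
    hsymSeries (insert a s) f = (mk fun n => f a ^ n) * hsymSeries s f := by
  ext k
  rw [hsymSeries, coeff_mk, sum_sym_insert ha, coeff_mul,
    Nat.sum_antidiagonal_eq_sum_range_succ (fun i j => coeff i (mk fun n => f a ^ n) * coeff j _)]
  simp [hsymSeries]

theorem hsymSeries_mul_prod_one_sub_C_mul_X {ι R : Type*} [DecidableEq ι] [CommRing R]
    (s : Finset ι) (f : ι → R) : hsymSeries s f * ∏ i ∈ s, (1 - C (f i) * X) = 1 := by
  induction s using Finset.induction_on with
  | empty =>
    ext (_ | k)
    · simp [hsymSeries, sym_zero]; rfl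
    · simp [hsymSeries, coeff_one]
  | insert a s ha ih =>
    rw [hsymSeries_insert ha, prod_insert ha, mul_mul_mul_comm,
      mk_pow_mul_one_sub_C_mul_X, ih, one_mul]

theorem rescale_neg_one_hsymSeries_mul_prod_one_add_C_mul_X {ι R : Type*} [DecidableEq ι]
    [CommRing R] (s : Finset ι) (f : ι → R) :
    rescale (-1) (hsymSeries s f) * ∏ i ∈ s, (1 + C (f i) * X) = 1 := by
  have rescale_C (c : R) : rescale (-1) (C c) = C c := by
    ext (_ | n) <;> simp [coeff_rescale, coeff_C]
  simpa [map_prod, rescale_X, rescale_C, sub_eq_add_neg] using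
    congrArg (rescale (-1)) (hsymSeries_mul_prod_one_sub_C_mul_X s f)

theorem cc_eq_coeff {n : ℕ} (w : Fin n → ℚ) (d : Fin (n + 1) → ℚ) (k : ℕ) :
    cc w d k = coeff k ((∏ i, (1 + C (d i) * X)) * rescale (-1) (hsymSeries univ w)) := by
  rw [coeff_mul, Nat.sum_antidiagonal_eq_sum_range_succ (fun i j => coeff i _ * coeff j _),
    prod_one_add_C_mul_X]
  refine sum_congr rfl fun i _ => ?_
  simp only [coeff_mk, coeff_rescale, hsymSeries, esym, hsym]
  ring

theorem Fin.prod_univ_eq_prod_castLE_mul_prod_succ_natAdd {M : Type*} [CommMonoid M] {n r : ℕ}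
    (g : Fin (n + r + 1) → M) :
    ∏ i, g i
      = (∏ i : Fin (n + 1), g (Fin.castLE (Nat.succ_le_succ (Nat.le_add_right n r)) i))
        * ∏ j : Fin r, g (natAdd n j).succ := by
  rw [prod_univ_succ, prod_univ_add, prod_univ_succ, mul_assoc]
  rfl

theorem mul_eq_mul_of_mul_eq_one {A : Type*} [CommRing A] {P P' Q Q' T H H' : A}
    (hP : P = P' * T) (hQ : Q = Q' * T) (hH : H * Q = 1) (hH' : H' * Q' = 1) :
    P * H = P' * H' := by
  linear_combination H * hP + P' * H' * hH - P' * H * T * hH' - P' * H * H' * hQ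

theorem prod_comp_of_trivial_unfolding {α M : Type*} [CommMonoid M] (F : α → M) {n r : ℕ}
    (w : Fin (n + r) → α) (d : Fin (n + r + 1) → α)
    (hd : ∀ i : Fin (n + r), n ≤ (i : ℕ) → d i.succ = w i) :
    ∏ i, F (d i)
      = (∏ i : Fin (n + 1), F (d (Fin.castLE (Nat.succ_le_succ (Nat.le_add_right n r)) i)))
        * ∏ j : Fin r, F (w (Fin.natAdd n j)) := by
  rw [Fin.prod_univ_eq_prod_castLE_mul_prod_succ_natAdd]
  simp_rw [hd _ (Fin.le_coe_natAdd _ _)]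

theorem trivial_unfolding_invariance (n r : ℕ)
    (w : Fin (n+r) → ℚ) (hw : ∀ i, w i ≠ 0) (d : Fin (n+r+1) → ℚ)
    (hd : ∀ i : Fin (n+r), n ≤ (i : ℕ) → d i.succ = w i) :
    (∀ k, cc w d k
        = cc (fun i : Fin n => w (Fin.castLE (by omega) i))
             (fun i : Fin (n+1) => d (Fin.castLE (by omega) i)) k) ∧
      (∏ i, d i) / (∏ j, w j)
        = (∏ i : Fin (n+1), d (Fin.castLE (by omega) i))
          / (∏ j : Fin n, w (Fin.castLE (by omega) j)) := by
  refine ⟨fun k => ?_, ?_⟩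
  · rw [cc_eq_coeff, cc_eq_coeff]
    congr 1
    exact mul_eq_mul_of_mul_eq_one
      (prod_comp_of_trivial_unfolding (fun a => 1 + C a * X) w d hd)
      (Fin.prod_univ_add fun j => 1 + C (w j) * X)
      (rescale_neg_one_hsymSeries_mul_prod_one_add_C_mul_X _ _)
      (rescale_neg_one_hsymSeries_mul_prod_one_add_C_mul_X _ _)
  · have hT : ∏ j : Fin r, w (Fin.natAdd n j) ≠ 0 := prod_ne_zero_iff.2 fun j _ => hw _
    rw [prod_comp_of_trivial_unfolding (fun a => a) w d hd, Fin.prod_univ_add w]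
    exact mul_div_mul_right _ _ hT
end

section
/- Let w₁, w₂ be nonzero rationals, d₀, d₁ rationals, and set d₂ = w₂. Define c₁ = d₀ + d₁ − w₁, c₂ = (d₀ − w₁)(d₁ − w₁), σ₂ = w₁w₂, and s₀ = d₀d₁d₂/(w₁w₂) = d₀d₁/w₁. Then s₀² − 3s₀c₁ + 2c₁² + 2c₂ = ((d₀ − 2w₁)(d₁ − 2w₁)/w₁²) · c₂. -/
theorem triple_point_numerator_eq {K : Type*} [Field K] (w d0 d1 : K) (hw : w ≠ 0) :
    (d0 * d1 / w) ^ 2 - 3 * (d0 * d1 / w) * (d0 + d1 - w) + 2 * (d0 + d1 - w) ^ 2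
        + 2 * ((d0 - w) * (d1 - w))
      = ((d0 - 2 * w) * (d1 - 2 * w) / w ^ 2) * ((d0 - w) * (d1 - w)) := by
  field_simp
  ring

theorem triple_point_relation (w1 w2 d0 d1 : ℚ) (hw1 : w1 ≠ 0) (hw2 : w2 ≠ 0) :
    let d2 := w2
    let c1 := d0 + d1 - w1
    let c2 := (d0 - w1) * (d1 - w1)
    let s0 := d0 * d1 * d2 / (w1 * w2)
    s0 ^ 2 - 3 * s0 * c1 + 2 * c1 ^ 2 + 2 * c2
      = ((d0 - 2 * w1) * (d1 - 2 * w1) / w1 ^ 2) * c2 := by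
  intro d2 c1 c2 s0
  have hs0 : s0 = d0 * d1 / w1 := mul_div_mul_right (d0 * d1) w1 hw2
  rw [hs0]
  exact triple_point_numerator_eq w1 d0 d1 hw1
end
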